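/- arXiv:2408.00831 — 4 statements merged into one kernel-verified Lean document; each statement's English description precedes it below -/
import Mathlib

section
/- Upper bound in Theorem 3 (achievability via the finite Vaidman scheme): The rank-one projective POVM {|ψ_c⟩⟨ψ_c|}_{c=1,…,4}, where ψ_1,…,ψ_4 are the columns of the unitary M_EJM, is 3-ebit localizable. -/
open Matrix Complex Kronecker
open scoped ComplexOrder

noncomputable section

/-- The identification of `Fin 2 × Fin 2` with `Fin 4`, ordering pairs as 00,01,10,11. -/
def pairEquiv : Fin 2 × Fin 2 ≃ Fin 4 where
  toFun p := ⟨2 * p.1.val + p.2.val, by have h1 := p.1.isLt; have h2 := p.2.isLt; omega⟩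
  invFun k := (⟨k.val / 2, by have := k.isLt; omega⟩, ⟨k.val % 2, by omega⟩)
  left_inv := by decide
  right_inv := by decide

/-- Kronecker product of two 2×2 matrices, as a 4×4 matrix indexed by `Fin 4`
with the ordering 00,01,10,11. -/
def kron (A B : Matrix (Fin 2) (Fin 2) ℂ) : Matrix (Fin 4) (Fin 4) ℂ :=
  Matrix.reindex pairEquiv pairEquiv (A ⊗ₖ B)

def σX : Matrix (Fin 2) (Fin 2) ℂ := !![0, 1; 1, 0]
def σY : Matrix (Fin 2) (Fin 2) ℂ := !![0, -Complex.I; Complex.I, 0]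
def σZ : Matrix (Fin 2) (Fin 2) ℂ := !![1, 0; 0, -1]

/-- The Pauli matrices indexed as σ₀ = I₂, σ₁ = σ_X, σ₂ = σ_Y, σ₃ = σ_Z. -/
def pauli (a : Fin 4) : Matrix (Fin 2) (Fin 2) ℂ :=
  if a = 0 then 1 else if a = 1 then σX else if a = 2 then σY else σZ

/-- A 4×4 complex matrix is a permutation matrix with phases if there is a permutation
`π` of the indices and unit-modulus phases `φ j` with `P (π j) j = φ j` and all other
entries zero. -/
def PermPhase (P : Matrix (Fin 4) (Fin 4) ℂ) : Prop :=
  ∃ (π : Equiv.Perm (Fin 4)) (φ : Fin 4 → ℂ),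
    (∀ j, ‖φ j‖ = 1) ∧ ∀ i j, P i j = if i = π j then φ j else 0

/-- The partial-trace map `T(A,B)` over the `n`-ebit ancillas:
`T(A,B)_{(i,j),(i',j')} = 2^{-n} ∑_{l,k} A_{(i,l),(i',k)} · B_{(j,l),(j',k)}`. -/
def Tmap (n : ℕ)
    (A B : Matrix (Fin 2 × Fin (2 ^ n)) (Fin 2 × Fin (2 ^ n)) ℂ) :
    Matrix (Fin 2 × Fin 2) (Fin 2 × Fin 2) ℂ :=
  Matrix.of fun p q =>
    ((2 : ℂ) ^ n)⁻¹ * ∑ l : Fin (2 ^ n), ∑ k : Fin (2 ^ n),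
      A (p.1, l) (q.1, k) * B (p.2, l) (q.2, k)

/-- A POVM `Msr` on ℂ²⊗ℂ² is `n`-ebit localizable if there are finite local POVMs
`A` and `B` on system ⊗ ancilla and a classical post-processing `p(c|a,b)` reproducing
all POVM elements via the shared state `(φ⁺)^{⊗n}`. -/
def NEbitLocalizable (n : ℕ) {C : Type} [Fintype C]
    (Msr : C → Matrix (Fin 2 × Fin 2) (Fin 2 × Fin 2) ℂ) : Prop :=
  ∃ (nA nB : ℕ)
    (A : Fin nA → Matrix (Fin 2 × Fin (2 ^ n)) (Fin 2 × Fin (2 ^ n)) ℂ)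
    (B : Fin nB → Matrix (Fin 2 × Fin (2 ^ n)) (Fin 2 × Fin (2 ^ n)) ℂ)
    (p : C → Fin nA → Fin nB → ℝ),
    (∀ a, (A a).PosSemidef) ∧ (∑ a, A a = 1) ∧
    (∀ b, (B b).PosSemidef) ∧ (∑ b, B b = 1) ∧
    (∀ c a b, 0 ≤ p c a b ∧ p c a b ≤ 1) ∧
    (∀ a b, ∑ c, p c a b = 1) ∧
    (∀ c, Msr c = ∑ a, ∑ b, (p c a b : ℂ) • Tmap n (A a) (B b))

/-- The rank-one projective POVM whose elements are the projectors onto the columns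
of the unitary `M`. -/
def projPOVM (M : Matrix (Fin 4) (Fin 4) ℂ) (c : Fin 4) :
    Matrix (Fin 2 × Fin 2) (Fin 2 × Fin 2) ℂ :=
  Matrix.of fun p q => M (pairEquiv p) c * star (M (pairEquiv q) c)

/-- The elegant joint measurement. -/
def M_EJM : Matrix (Fin 4) (Fin 4) ℂ :=
  ((Real.sqrt 8 : ℂ))⁻¹ •
    !![1 + Complex.I, -1 + Complex.I, 1 - Complex.I, -1 - Complex.I;
       -(2 * Complex.I), 0, 0, -(2 * Complex.I);
       0, 2 * Complex.I, 2 * Complex.I, 0;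
       1 - Complex.I, -1 - Complex.I, 1 + Complex.I, -1 + Complex.I]

/-!
Both parties make a Bell measurement on their qubit and their half of the first ebit, and measure
their halves of the other two ebits, a four-level register, in a Walsh–Hadamard basis twisted by
diagonal phases. Alice's Bell label is shifted by the register value, and Bob's phases depend on
his Bell outcome. Through the maximally entangled ancillas, each of the `16 × 16` pairs of rank-one
outcomes contracts to `1/64` of one EJM projector, and each EJM projector is reached by exactly
`64` pairs. Up to the factor `1/√8` all vectors involved have Gaussian integer entries, so these
finitely many identities can be checked by evaluation.
-/

local notation "ℤ[i]" => GaussianInt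

local notation "𝐢" => (Zsqrtd.sqrtd : ℤ[i])

/-- `u ⊗ v` paired with the maximally entangled state of the two copies of `κ`, unnormalised. -/
def ancillaContract {R ι ι' κ : Type*} [CommSemiring R] [Fintype κ]
    (u : ι × κ → R) (v : ι' × κ → R) : ι × ι' → R :=
  fun p => ∑ l, u (p.1, l) * v (p.2, l)

theorem Tmap_vecMulVec {n : ℕ} (u v : Fin 2 × Fin (2 ^ n) → ℂ) :
    Tmap n (vecMulVec u (star u)) (vecMulVec v (star v)) =
      ((2 : ℂ) ^ n)⁻¹ • vecMulVec (ancillaContract u v) (star (ancillaContract u v)) := by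
  ext p q
  simp only [Tmap, of_apply, Matrix.smul_apply, smul_eq_mul, vecMulVec_apply, ancillaContract,
    Pi.star_apply, star_sum, star_mul', Finset.sum_mul_sum]
  congr 1
  exact Finset.sum_congr rfl fun l _ => Finset.sum_congr rfl fun k _ => by ring

theorem NEbitLocalizable.of_deterministic {n : ℕ} {C α β : Type} [Fintype C] [DecidableEq C]
    [Fintype α] [Fintype β] (Msr : C → Matrix (Fin 2 × Fin 2) (Fin 2 × Fin 2) ℂ)
    (A : α → Matrix (Fin 2 × Fin (2 ^ n)) (Fin 2 × Fin (2 ^ n)) ℂ)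
    (B : β → Matrix (Fin 2 × Fin (2 ^ n)) (Fin 2 × Fin (2 ^ n)) ℂ) (f : α → β → C)
    (hA : ∀ a, (A a).PosSemidef) (hA₁ : ∑ a, A a = 1)
    (hB : ∀ b, (B b).PosSemidef) (hB₁ : ∑ b, B b = 1)
    (hMsr : ∀ c, Msr c = ∑ ab ∈ Finset.univ.filter (fun ab : α × β => f ab.1 ab.2 = c),
      Tmap n (A ab.1) (B ab.2)) :
    NEbitLocalizable n Msr := by
  set eα := Fintype.equivFin α
  set eβ := Fintype.equivFin β
  refine ⟨_, _, fun a => A (eα.symm a), fun b => B (eβ.symm b),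
    fun c a b => if f (eα.symm a) (eβ.symm b) = c then 1 else 0,
    fun a => hA _, by rwa [eα.symm.sum_comp], fun b => hB _, by rwa [eβ.symm.sum_comp],
    fun c a b => by dsimp only; split_ifs <;> norm_num, fun a b => by simp [Finset.sum_ite_eq],
    fun c => ?_⟩
  rw [hMsr, Finset.sum_filter, Fintype.sum_prod_type, ← eα.symm.sum_comp]
  refine Finset.sum_congr rfl fun a _ => ?_
  rw [← eβ.symm.sum_comp]
  refine Finset.sum_congr rfl fun b _ => ?_
  dsimp only
  split_ifs <;> simp

theorem projPOVM_eq_vecMulVec (M : Matrix (Fin 4) (Fin 4) ℂ) (c : Fin 4) :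
    projPOVM M c = vecMulVec (fun p => M (pairEquiv p) c) (star fun p => M (pairEquiv p) c) :=
  rfl

section GaussianVectors

variable {ι κ : Type*}

theorem vecMulVec_mul_cast (z : ℂ) (U : ι → ℤ[i]) :
    vecMulVec (fun x => z * U x) (star fun x => z * U x) =
      (Complex.normSq z : ℂ) • (vecMulVec U (star U)).map (↑) := by
  ext x y
  simp only [vecMulVec_apply, Pi.star_apply, Matrix.smul_apply, map_apply, smul_eq_mul,
    GaussianInt.toComplex_mul, GaussianInt.toComplex_star, star_mul', Complex.star_def]
  rw [← Complex.mul_conj]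
  ring

theorem sum_vecMulVec_mul_cast [Fintype ι] [Fintype κ] [DecidableEq κ] (z : ℂ)
    (U : ι → κ → ℤ[i]) (N : ℕ) (hU : ∑ a, vecMulVec (U a) (star (U a)) = N)
    (hz : Complex.normSq z * N = 1) :
    ∑ a, vecMulVec (fun x => z * U a x) (star fun x => z * U a x) = 1 := by
  have hmap (M : Matrix κ κ ℤ[i]) : M.map (↑) = GaussianInt.toComplex.mapMatrix M := rfl
  simp_rw [vecMulVec_mul_cast, ← Finset.smul_sum, hmap, ← map_sum, hU, map_natCast,
    ← Nat.smul_one_eq_cast, ← Nat.cast_smul_eq_nsmul ℂ, smul_smul]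
  norm_cast
  rw [hz, one_smul]

theorem ancillaContract_mul_cast {ι' : Type*} [Fintype κ] (z z' : ℂ) (U : ι × κ → ℤ[i])
    (V : ι' × κ → ℤ[i]) :
    ancillaContract (fun x => z * (U x : ℂ)) (fun x => z' * (V x : ℂ)) =
      fun p => z * z' * ((ancillaContract U V p : ℤ[i]) : ℂ) := by
  ext p
  simp only [ancillaContract, map_sum, GaussianInt.toComplex_mul, Finset.mul_sum]
  exact Finset.sum_congr rfl fun l _ => by ring

end GaussianVectors

namespace VaidmanEJM

theorem normSq_inv_sqrt_eight : Complex.normSq ((√8 : ℝ) : ℂ)⁻¹ = 8⁻¹ := by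
  rw [map_inv₀, Complex.normSq_ofReal, Real.mul_self_sqrt (by norm_num)]

def ejmGauss : Matrix (Fin 4) (Fin 4) ℤ[i] :=
  !![1 + 𝐢, -1 + 𝐢, 1 - 𝐢, -1 - 𝐢;
     -(2 * 𝐢), 0, 0, -(2 * 𝐢);
     0, 2 * 𝐢, 2 * 𝐢, 0;
     1 - 𝐢, -1 - 𝐢, 1 + 𝐢, -1 + 𝐢]

theorem M_EJM_eq_smul_map : M_EJM = ((√8 : ℝ) : ℂ)⁻¹ • ejmGauss.map (↑) := by
  ext i j
  fin_cases i <;> fin_cases j <;>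
    simp [M_EJM, ejmGauss, GaussianInt.toComplex_def, sub_eq_add_neg]

def ejmGaussCol (c : Fin 4) (p : Fin 2 × Fin 2) : ℤ[i] := ejmGauss (pairEquiv p) c

theorem projPOVM_M_EJM (c : Fin 4) :
    projPOVM M_EJM c =
      (8 : ℂ)⁻¹ • (vecMulVec (ejmGaussCol c) (star (ejmGaussCol c))).map (↑) := by
  have hcol : (fun p => M_EJM (pairEquiv p) c) =
      fun p => ((√8 : ℝ) : ℂ)⁻¹ * (ejmGaussCol c p : ℂ) := by
    ext p
    simp [M_EJM_eq_smul_map, ejmGaussCol]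
  rw [projPOVM_eq_vecMulVec, hcol, vecMulVec_mul_cast, normSq_inv_sqrt_eight]
  push_cast
  rfl

def pauliGauss : Fin 4 → Matrix (Fin 2) (Fin 2) ℤ[i] :=
  ![1, !![0, 1; 1, 0], !![0, -𝐢; 𝐢, 0], !![1, 0; 0, -1]]

/-- The ancilla index `l = 4 m + k`: `m` is the first ebit, `k` the register of the other two. -/
def ebitSplit : Fin (2 ^ 3) ≃ Fin 2 × Fin 4 := (finProdFinEquiv (m := 2) (n := 4)).symm

def walsh : Fin 4 → Fin 4 → ℤ[i] :=
  ![![1, 1, 1, 1], ![1, 1, -1, -1], ![1, -1, 1, -1], ![1, -1, -1, 1]]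

def alicePhase : Fin 4 → ℤ[i] := ![1, -𝐢, 1, 𝐢]

def bobPhase : Fin 4 → Fin 4 → ℤ[i] :=
  ![![1, 1, 1, 1], ![1, 1, -𝐢, 𝐢], ![1, -𝐢, 1, 𝐢], ![1, -𝐢, -𝐢, -1]]

def aliceGaussVec (a : Fin 4 × Fin 4) (x : Fin 2 × Fin (2 ^ 3)) : ℤ[i] :=
  let (m, k) := ebitSplit x.2
  walsh a.2 k * alicePhase k * pauliGauss (a.1 ^^^ k) x.1 m

def bobGaussVec (b : Fin 4 × Fin 4) (x : Fin 2 × Fin (2 ^ 3)) : ℤ[i] :=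
  let (m, k) := ebitSplit x.2
  walsh b.2 k * bobPhase b.1 k * pauliGauss b.1 x.1 m

def ejmOutcomeShift : Fin 4 → Fin 4 → Fin 4 :=
  ![![0, 2, 2, 3], ![3, 0, 2, 2], ![2, 3, 2, 0], ![1, 1, 2, 1]]

def ejmOutcome (a b : Fin 4 × Fin 4) : Fin 4 := a.2 ^^^ b.2 ^^^ ejmOutcomeShift a.1 b.1

theorem sum_vecMulVec_aliceGaussVec :
    ∑ a, vecMulVec (aliceGaussVec a) (star (aliceGaussVec a)) = (8 : ℕ) := by
  decide +kernel

theorem sum_vecMulVec_bobGaussVec :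
    ∑ b, vecMulVec (bobGaussVec b) (star (bobGaussVec b)) = (8 : ℕ) := by
  decide +kernel

/-- Stated for the projectors, the contraction being the EJM column only up to a unit. -/
theorem vecMulVec_ancillaContract_gaussVec (a b : Fin 4 × Fin 4) :
    vecMulVec (ancillaContract (aliceGaussVec a) (bobGaussVec b))
        (star (ancillaContract (aliceGaussVec a) (bobGaussVec b))) =
      vecMulVec (ejmGaussCol (ejmOutcome a b)) (star (ejmGaussCol (ejmOutcome a b))) := by
  revert a b
  decide +kernel

theorem card_filter_ejmOutcome (c : Fin 4) :
    (Finset.univ.filter fun ab : (Fin 4 × Fin 4) × (Fin 4 × Fin 4) =>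
      ejmOutcome ab.1 ab.2 = c).card = 64 := by
  revert c
  decide +kernel

def aliceEffect (a : Fin 4 × Fin 4) : Matrix (Fin 2 × Fin (2 ^ 3)) (Fin 2 × Fin (2 ^ 3)) ℂ :=
  vecMulVec (fun x => ((√8 : ℝ) : ℂ)⁻¹ * aliceGaussVec a x)
    (star fun x => ((√8 : ℝ) : ℂ)⁻¹ * aliceGaussVec a x)

def bobEffect (b : Fin 4 × Fin 4) : Matrix (Fin 2 × Fin (2 ^ 3)) (Fin 2 × Fin (2 ^ 3)) ℂ :=
  vecMulVec (fun x => ((√8 : ℝ) : ℂ)⁻¹ * bobGaussVec b x)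
    (star fun x => ((√8 : ℝ) : ℂ)⁻¹ * bobGaussVec b x)

theorem sum_aliceEffect : ∑ a, aliceEffect a = 1 :=
  sum_vecMulVec_mul_cast _ _ 8 sum_vecMulVec_aliceGaussVec
    (by rw [normSq_inv_sqrt_eight]; norm_num)

theorem sum_bobEffect : ∑ b, bobEffect b = 1 :=
  sum_vecMulVec_mul_cast _ _ 8 sum_vecMulVec_bobGaussVec
    (by rw [normSq_inv_sqrt_eight]; norm_num)

theorem Tmap_aliceEffect_bobEffect (a b : Fin 4 × Fin 4) :
    Tmap 3 (aliceEffect a) (bobEffect b) = (64 : ℂ)⁻¹ • projPOVM M_EJM (ejmOutcome a b) := by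
  rw [aliceEffect, bobEffect, Tmap_vecMulVec, ancillaContract_mul_cast, vecMulVec_mul_cast,
    vecMulVec_ancillaContract_gaussVec, projPOVM_M_EJM, map_mul, normSq_inv_sqrt_eight,
    smul_smul, smul_smul]
  norm_num

theorem sum_Tmap_ejmOutcome_fiber (c : Fin 4) :
    ∑ ab ∈ Finset.univ.filter (fun ab : (Fin 4 × Fin 4) × (Fin 4 × Fin 4) =>
        ejmOutcome ab.1 ab.2 = c), Tmap 3 (aliceEffect ab.1) (bobEffect ab.2) =
      projPOVM M_EJM c := by
  rw [Finset.sum_congr rfl fun ab hab =>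
      (Finset.mem_filter.1 hab).2 ▸ Tmap_aliceEffect_bobEffect ab.1 ab.2,
    Finset.sum_const, card_filter_ejmOutcome, ← Nat.cast_smul_eq_nsmul ℂ, smul_smul]
  norm_num

end VaidmanEJM

/-- The elegant joint measurement is 3-ebit localizable. -/
theorem ejm_three_ebit_localizable : NEbitLocalizable 3 (projPOVM M_EJM) :=
  .of_deterministic _ VaidmanEJM.aliceEffect VaidmanEJM.bobEffect VaidmanEJM.ejmOutcome
    (fun _ => posSemidef_vecMulVec_self_star _) VaidmanEJM.sum_aliceEffect
    (fun _ => posSemidef_vecMulVec_self_star _) VaidmanEJM.sum_bobEffect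
    fun c => (VaidmanEJM.sum_Tmap_ejmOutcome_fiber c).symm
end
end

section
/- Lemma 2 (uniqueness of the intertwiner up to a local unitary): Let M and N be 4×4 complex unitary matrices such that M†·(I₂⊗σ_b)·M = N†·(I₂⊗σ_b)·N for every b ∈ {X,Y,Z}. Then there exists a 2×2 unitary matrix U such that N = (U⊗I₂)·M. -/
/-!
`V = N M†` is unitary and, by hypothesis, commutes with `I₂ ⊗ σ_X` and `I₂ ⊗ σ_Z`. Viewed as a
2×2 array of 2×2 blocks, every block of `V` then commutes with `σ_X` and `σ_Z`, hence is scalar,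
so `V = U ⊗ I₂`; and `U` is unitary because `V` is.
-/

open Matrix Complex Kronecker

noncomputable section

theorem commute_mul_star_of_star_mul_mul_eq {R : Type*} [Monoid R] [StarMul R] {a b x : R}
    (ha : a ∈ unitary R) (hb : b ∈ unitary R) (h : star a * x * a = star b * x * b) :
    Commute (b * star a) x :=
  calc b * star a * x = b * star a * x * (a * star a) := by
        rw [Unitary.mul_star_self_of_mem ha, mul_one]
    _ = b * (star a * x * a) * star a := by simp only [mul_assoc]
    _ = b * (star b * x * b) * star a := by rw [h]
    _ = b * star b * x * (b * star a) := by simp only [mul_assoc]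
    _ = x * (b * star a) := by rw [Unitary.mul_star_self_of_mem hb, one_mul]

theorem eq_scalar_of_commute_σX_of_commute_σZ {B : Matrix (Fin 2) (Fin 2) ℂ}
    (hX : Commute B σX) (hZ : Commute B σZ) : B = scalar (Fin 2) (B 0 0) := by
  have hX10 := congrFun (congrFun hX.eq 1) 0
  have hZ01 := congrFun (congrFun hZ.eq 0) 1
  have hZ10 := congrFun (congrFun hZ.eq 1) 0
  simp only [σX, σZ, mul_apply, of_apply, cons_val', cons_val_zero, cons_val_one,
    cons_val_fin_one, Fin.sum_univ_two, mul_zero, mul_one, zero_add, one_mul, zero_mul, add_zero,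
    mul_neg, neg_mul] at hX10 hZ01 hZ10
  have h01 : B 0 1 = 0 := by linear_combination (-1 / 2 : ℂ) * hZ01
  have h10 : B 1 0 = 0 := by linear_combination (1 / 2 : ℂ) * hZ10
  have h11 : B 1 1 = B 0 0 := by linear_combination hX10
  ext i j
  fin_cases i <;> fin_cases j <;> simp [h01, h10, h11]

theorem commute_one_kronecker_iff {ι n R : Type*} [Fintype ι] [DecidableEq ι] [Fintype n]
    [Semiring R] (W : Matrix (ι × n) (ι × n) R) (S : Matrix n n R) :
    Commute W (1 ⊗ₖ S) ↔ ∀ i j, Commute ((comp ι ι n n R).symm W i j) S := by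
  have hS : (1 : Matrix ι ι R) ⊗ₖ S = compRingEquiv ι n R (diagonal fun _ => S) := by
    ext ⟨i, a⟩ ⟨j, b⟩
    by_cases hij : i = j <;> simp [hij, one_apply]
  rw [hS, ← commute_map_iff (compRingEquiv ι n R).symm.injective, RingEquiv.symm_apply_apply,
    Commute, SemiconjBy, ← Matrix.ext_iff]
  simp only [mul_diagonal, diagonal_mul, compRingEquiv_symm_apply]
  rfl

theorem eq_kronecker_one_of_commute_σX_of_commute_σZ {ι : Type*} [Fintype ι] [DecidableEq ι]
    {W : Matrix (ι × Fin 2) (ι × Fin 2) ℂ} (hX : Commute W (1 ⊗ₖ σX))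
    (hZ : Commute W (1 ⊗ₖ σZ)) : W = of (fun i j => W (i, 0) (j, 0)) ⊗ₖ 1 := by
  rw [commute_one_kronecker_iff] at hX hZ
  ext ⟨i, a⟩ ⟨j, b⟩
  simpa [one_apply, diagonal_apply] using
    congrFun (congrFun (eq_scalar_of_commute_σX_of_commute_σZ (hX i j) (hZ i j)) a) b

theorem mem_unitaryGroup_of_kronecker_one_mem {m n R : Type*} [Fintype m] [DecidableEq m]
    [Fintype n] [DecidableEq n] [Nonempty n] [CommRing R] [StarRing R] {A : Matrix m m R}
    (h : A ⊗ₖ (1 : Matrix n n R) ∈ unitaryGroup (m × n) R) : A ∈ unitaryGroup m R := by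
  obtain ⟨c⟩ := ‹Nonempty n›
  rw [mem_unitaryGroup_iff', star_eq_conjTranspose, conjTranspose_kronecker, conjTranspose_one,
    ← mul_kronecker_mul, mul_one] at h
  rw [mem_unitaryGroup_iff', star_eq_conjTranspose]
  ext i j
  simpa [one_apply] using congrFun (congrFun h (i, c)) (j, c)

theorem reindex_mem_unitaryGroup {m n R : Type*} [Fintype m] [DecidableEq m] [Fintype n]
    [DecidableEq n] [CommRing R] [StarRing R] (e : m ≃ n) {A : Matrix m m R}
    (hA : A ∈ unitaryGroup m R) : reindex e e A ∈ unitaryGroup n R := by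
  rw [mem_unitaryGroup_iff', star_eq_conjTranspose, conjTranspose_reindex,
    ← coe_reindexRingEquiv, ← map_mul, ← star_eq_conjTranspose, mem_unitaryGroup_iff'.mp hA,
    map_one]

theorem exists_kron_one_eq_of_commute_σX_of_commute_σZ {V : Matrix (Fin 4) (Fin 4) ℂ}
    (hV : V ∈ unitaryGroup (Fin 4) ℂ) (hX : Commute V (kron 1 σX)) (hZ : Commute V (kron 1 σZ)) :
    ∃ U ∈ unitaryGroup (Fin 2) ℂ, kron U 1 = V := by
  set e := reindexRingEquiv ℂ pairEquiv
  have hkron (A B : Matrix (Fin 2) (Fin 2) ℂ) : kron A B = e (A ⊗ₖ B) := rfl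
  have hW := eq_kronecker_one_of_commute_σX_of_commute_σZ
    (by simpa [hkron] using hX.map e.symm) (by simpa [hkron] using hZ.map e.symm)
  refine ⟨of fun i j => e.symm V (i, 0) (j, 0),
    mem_unitaryGroup_of_kronecker_one_mem (n := Fin 2) ?_, ?_⟩
  · rw [← hW]
    exact reindex_mem_unitaryGroup pairEquiv.symm hV
  · rw [hkron, ← hW, e.apply_symm_apply]

/-- Lemma 2: uniqueness of the intertwiner up to a local unitary on the first factor. -/
theorem intertwiner_unique (M N : Matrix (Fin 4) (Fin 4) ℂ)
    (hM : M ∈ Matrix.unitaryGroup (Fin 4) ℂ) (hN : N ∈ Matrix.unitaryGroup (Fin 4) ℂ)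
    (h : ∀ b ∈ ({σX, σY, σZ} : Set (Matrix (Fin 2) (Fin 2) ℂ)),
      Mᴴ * kron 1 b * M = Nᴴ * kron 1 b * N) :
    ∃ U : Matrix (Fin 2) (Fin 2) ℂ, U ∈ Matrix.unitaryGroup (Fin 2) ℂ ∧
      N = kron U 1 * M := by
  have hcomm (b) (hb : b ∈ ({σX, σY, σZ} : Set _)) : Commute (N * star M) (kron 1 b) :=
    commute_mul_star_of_star_mul_mul_eq hM hN (h b hb)
  obtain ⟨U, hU, hUV⟩ := exists_kron_one_eq_of_commute_σX_of_commute_σZ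
    (mul_mem hN (Unitary.star_mem hM)) (hcomm σX (by simp)) (hcomm σZ (by simp))
  refine ⟨U, hU, ?_⟩
  rw [hUV, mul_assoc, Unitary.star_mul_self_of_mem hM, mul_one]
end
end

section
/- The Clifford hierarchy is contained in the finite-consumption Vaidman hierarchy: for every k ≥ 0, C_k ⊆ V̄_k, and for every k ≥ 1, C_k ⊆ V_k. -/
open Matrix Complex Kronecker

noncomputable section

/-- The two-qubit Pauli group: matrices `c·(σ_a ⊗ σ_b)` with `c ∈ {1, i, -1, -i}`. -/
def PauliGroup : Set (Matrix (Fin 4) (Fin 4) ℂ) :=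
  {Q | ∃ (a b : Fin 4) (c : ℂ),
    (c = 1 ∨ c = Complex.I ∨ c = -1 ∨ c = -Complex.I) ∧
    Q = c • kron (pauli a) (pauli b)}

/-- The Clifford hierarchy: `C 0` is the Pauli group and `C (k+1)` consists of the
unitaries mapping the Pauli group into `C k` under conjugation. -/
def Cliff : ℕ → Set (Matrix (Fin 4) (Fin 4) ℂ)
  | 0 => PauliGroup
  | k + 1 => {U | U ∈ Matrix.unitaryGroup (Fin 4) ℂ ∧
      ∀ Q ∈ PauliGroup, Uᴴ * Q * U ∈ Cliff k}

/-- The auxiliary Vaidman hierarchy `V̄`. -/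
def Vbar : ℕ → Set (Matrix (Fin 4) (Fin 4) ℂ)
  | 0 => {P | PermPhase P}
  | k + 1 => {M | M ∈ Matrix.unitaryGroup (Fin 4) ℂ ∧
      ∀ Q ∈ PauliGroup, Mᴴ * Q * M ∈ Vbar k}

/-- The Vaidman hierarchy `V` (defined for levels `k ≥ 1`). -/
def Vaid : ℕ → Set (Matrix (Fin 4) (Fin 4) ℂ)
  | 0 => {P | PermPhase P}
  | k + 1 => {M | M ∈ Matrix.unitaryGroup (Fin 4) ℂ ∧
      ∀ b : Fin 4, Mᴴ * kron 1 (pauli b) * M ∈ Vbar k}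

/-!
Every two-qubit Pauli operator is a permutation matrix with phases: each σ_a is one, and
Kronecker products, reindexing and unit-modulus scalars preserve the property. Hence
C_0 ⊆ V̄_0, and since C_{k+1} and V̄_{k+1} are cut out from C_k and V̄_k by the same
condition, C_k ⊆ V̄_k for all k. Finally V_{k+1} only tests conjugates of the
operators I ⊗ σ_b, which are Pauli operators, so C_{k+1} ⊆ V_{k+1}.
-/

/-- `PermPhase` is this predicate at `Fin 4` over `ℂ`, definitionally. -/
def IsPhasedPerm {R n : Type*} [NormedDivisionRing R] [DecidableEq n]
    (A : Matrix n n R) : Prop :=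
  ∃ (π : Equiv.Perm n) (φ : n → R),
    (∀ j, ‖φ j‖ = 1) ∧ ∀ i j, A i j = if i = π j then φ j else 0

namespace IsPhasedPerm

variable {R m n : Type*} [NormedDivisionRing R] [DecidableEq m] [DecidableEq n]

theorem smul {A : Matrix n n R} (hA : IsPhasedPerm A) {c : R} (hc : ‖c‖ = 1) :
    IsPhasedPerm (c • A) := by
  obtain ⟨π, φ, hφ, hA⟩ := hA
  refine ⟨π, fun j => c * φ j, fun j => by rw [norm_mul, hc, hφ, one_mul], fun i j => ?_⟩
  rw [Matrix.smul_apply, hA, smul_eq_mul, mul_ite, mul_zero]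

theorem kronecker {A : Matrix m m R} {B : Matrix n n R}
    (hA : IsPhasedPerm A) (hB : IsPhasedPerm B) : IsPhasedPerm (A ⊗ₖ B) := by
  obtain ⟨π₁, φ₁, hφ₁, hA⟩ := hA
  obtain ⟨π₂, φ₂, hφ₂, hB⟩ := hB
  refine ⟨Equiv.prodCongr π₁ π₂, fun j => φ₁ j.1 * φ₂ j.2,
    fun j => by rw [norm_mul, hφ₁, hφ₂, one_mul], fun i j => ?_⟩
  rw [kroneckerMap_apply, hA, hB]
  by_cases h₁ : i.1 = π₁ j.1 <;> by_cases h₂ : i.2 = π₂ j.2 <;> simp [h₁, h₂, Prod.ext_iff]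

theorem reindex {A : Matrix m m R} (hA : IsPhasedPerm A) (e : m ≃ n) :
    IsPhasedPerm (Matrix.reindex e e A) := by
  obtain ⟨π, φ, hφ, hA⟩ := hA
  refine ⟨e.symm.trans (π.trans e), φ ∘ e.symm, fun j => hφ _, fun i j => ?_⟩
  simp only [reindex_apply, submatrix_apply, hA, Equiv.trans_apply, Equiv.symm_apply_eq,
    Function.comp_apply]
  congr

end IsPhasedPerm

theorem isPhasedPerm_pauli (a : Fin 4) : IsPhasedPerm (pauli a) := by
  fin_cases a
  · refine ⟨Equiv.refl _, 1, fun _ => norm_one, fun i j => ?_⟩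
    fin_cases i <;> fin_cases j <;> simp [pauli]
  · refine ⟨Equiv.swap 0 1, 1, fun _ => norm_one, fun i j => ?_⟩
    fin_cases i <;> fin_cases j <;> simp [pauli, σX]
  · refine ⟨Equiv.swap 0 1, ![I, -I], fun j => by fin_cases j <;> simp, fun i j => ?_⟩
    fin_cases i <;> fin_cases j <;> simp [pauli, σY]
  · refine ⟨Equiv.refl _, ![1, -1], fun j => by fin_cases j <;> simp, fun i j => ?_⟩
    fin_cases i <;> fin_cases j <;> simp [pauli, σZ]

theorem permPhase_of_mem_pauliGroup {Q : Matrix (Fin 4) (Fin 4) ℂ} (hQ : Q ∈ PauliGroup) :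
    PermPhase Q := by
  obtain ⟨a, b, c, hc, rfl⟩ := hQ
  have hc : ‖c‖ = 1 := by rcases hc with rfl | rfl | rfl | rfl <;> simp
  exact (((isPhasedPerm_pauli a).kronecker (isPhasedPerm_pauli b)).reindex pairEquiv).smul hc

theorem kron_one_pauli_mem_pauliGroup (b : Fin 4) : kron 1 (pauli b) ∈ PauliGroup :=
  ⟨0, b, 1, Or.inl rfl, by rw [one_smul]; rfl⟩

theorem cliff_subset_vbar : ∀ k, Cliff k ⊆ Vbar k
  | 0 => fun _ => permPhase_of_mem_pauliGroup
  | k + 1 => fun _ hU => ⟨hU.1, fun Q hQ => cliff_subset_vbar k (hU.2 Q hQ)⟩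

theorem cliff_succ_subset_vaid (k : ℕ) : Cliff (k + 1) ⊆ Vaid (k + 1) :=
  fun _ hU => ⟨hU.1, fun b => cliff_subset_vbar k (hU.2 _ (kron_one_pauli_mem_pauliGroup b))⟩

/-- The Clifford hierarchy is contained in the finite-consumption Vaidman hierarchy. -/
theorem clifford_subset_vaidman :
    (∀ k : ℕ, Cliff k ⊆ Vbar k) ∧ (∀ k : ℕ, 1 ≤ k → Cliff k ⊆ Vaid k) := by
  refine ⟨cliff_subset_vbar, fun k hk => ?_⟩
  obtain ⟨m, rfl⟩ := Nat.exists_eq_add_of_le' hk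
  exact cliff_succ_subset_vaid m
end
end

section
/- Deterministic termination for binary-angle Pauli rotations in the Clark et al. scheme: Let P be an n×n complex matrix with P² = I_n, let D be a nonnegative integer, let m be an integer, and set θ = (2m−1)·π/2^D. Then exp(−i·(2^{D+1}−1)·θ·P) = exp(i·θ·P); that is, after D+1 consecutive sign errors the accumulated rotation by angle −∑_{n=0}^{D} 2^n·θ equals the intended rotation by θ, so the localization of a Pauli rotation with binary angle θ is guaranteed to succeed after at most D+1 ping-pong teleportation steps. -/
/-! Because `P² = 1`, `exp(iαP) = cos α · 1 + i sin α · P` is `2π`-periodic in `α`, and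
`2^{D+1} θ = (2m − 1) · 2π`, so `−(2^{D+1} − 1) θ ≡ θ (mod 2π)`. -/

open Matrix Complex

noncomputable section

open scoped Nat

section Involution

variable {A : Type*} [Ring A] [Algebra ℂ A] [TopologicalSpace A] [IsTopologicalRing A]
  [T2Space A] [ContinuousSMul ℂ A] {P : A}

/-- Since `P ^ 2 = 1`, the exponential series splits into its even part `(∑ z^(2k)/(2k)!) • 1`
and its odd part `(∑ z^(2k+1)/(2k+1)!) • P`. -/
theorem NormedSpace.exp_smul_eq_cosh_add_sinh_of_mul_self_eq_one (hP : P * P = 1) (z : ℂ) :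
    NormedSpace.exp (z • P) = cosh z • (1 : A) + sinh z • P := by
  have hP_pow_even (k : ℕ) : P ^ (2 * k) = 1 := by rw [pow_mul, sq, hP, one_pow]
  have heven (k : ℕ) : ((2 * k)! : ℂ)⁻¹ • (z • P) ^ (2 * k) =
      (z ^ (2 * k) / (2 * k)!) • (1 : A) := by
    rw [smul_pow, hP_pow_even, smul_smul, div_eq_inv_mul]
  have hodd (k : ℕ) : ((2 * k + 1)! : ℂ)⁻¹ • (z • P) ^ (2 * k + 1) =
      (z ^ (2 * k + 1) / (2 * k + 1)!) • P := by
    rw [smul_pow, pow_succ P, hP_pow_even, one_mul, smul_smul, div_eq_inv_mul]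
  rw [NormedSpace.exp_eq_tsum ℂ]
  refine HasSum.tsum_eq (HasSum.even_add_odd ?_ ?_)
  · simpa only [heven] using (hasSum_cosh z).smul_const (1 : A)
  · simpa only [hodd] using (hasSum_sinh z).smul_const P

theorem NormedSpace.exp_I_mul_smul_eq_cos_add_sin_of_mul_self_eq_one (hP : P * P = 1)
    (α : ℂ) : NormedSpace.exp ((I * α) • P) = cos α • (1 : A) + (I * sin α) • P := by
  rw [NormedSpace.exp_smul_eq_cosh_add_sinh_of_mul_self_eq_one hP, mul_comm, cosh_mul_I,
    sinh_mul_I, mul_comm]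

theorem NormedSpace.exp_I_mul_sub_int_mul_two_pi_smul_of_mul_self_eq_one (hP : P * P = 1)
    (α : ℂ) (k : ℤ) :
    NormedSpace.exp ((I * (α - k * (2 * Real.pi))) • P) = NormedSpace.exp ((I * α) • P) := by
  rw [NormedSpace.exp_I_mul_smul_eq_cos_add_sin_of_mul_self_eq_one hP,
    NormedSpace.exp_I_mul_smul_eq_cos_add_sin_of_mul_self_eq_one hP,
    cos_sub_int_mul_two_pi, sin_sub_int_mul_two_pi]

end Involution

theorem two_pow_succ_mul_binary_angle (D : ℕ) (m : ℤ) :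
    (2 : ℂ) ^ (D + 1) * (((2 * (m : ℝ) - 1) * Real.pi / 2 ^ D : ℝ) : ℂ) =
      ((2 * m - 1 : ℤ) : ℂ) * (2 * Real.pi) := by
  push_cast
  field_simp
  ring

/-- Deterministic termination for binary-angle Pauli rotations in the Clark et al.
scheme: if `P² = 1` and `θ = (2m−1)π/2^D`, then
`exp(−i(2^{D+1}−1)θ·P) = exp(iθ·P)`. -/
theorem binary_angle_termination (n : ℕ) (P : Matrix (Fin n) (Fin n) ℂ)
    (hP : P * P = 1) (D : ℕ) (m : ℤ) :
    NormedSpace.exp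
        ((-(Complex.I * ((2 ^ (D + 1) - 1 : ℂ) *
          (((2 * (m : ℝ) - 1) * Real.pi / 2 ^ D : ℝ) : ℂ)))) • P) =
      NormedSpace.exp
        ((Complex.I * (((2 * (m : ℝ) - 1) * Real.pi / 2 ^ D : ℝ) : ℂ)) • P) := by
  set θ : ℂ := (((2 * (m : ℝ) - 1) * Real.pi / 2 ^ D : ℝ) : ℂ)
  have hangle : -(I * ((2 ^ (D + 1) - 1 : ℂ) * θ)) =
      I * (θ - ((2 * m - 1 : ℤ) : ℂ) * (2 * Real.pi)) := by
    rw [← two_pow_succ_mul_binary_angle]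
    ring
  rw [hangle, NormedSpace.exp_I_mul_sub_int_mul_two_pi_smul_of_mul_self_eq_one hP]
end
end
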